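/- For every n ≥ 2, where ζ = exp(iπ/n), the ℂ-algebra homomorphism from ℂ[H,E]/⟨Hⁿ − Eⁿ, HE⟩ to ℂ[h,e]/⟨hⁿ + (−1)ⁿ(e/n)ⁿ, he⟩ given by H ↦ h and E ↦ −ζ·(e/n) is a well-defined ring isomorphism. -/

import Mathlib

open MvPolynomial

/-- The Chen-Ruan cohomology ring of `P(1,…,1,n)`: `ℂ[H,E]/⟨Hⁿ − Eⁿ, HE⟩`,
with `X 0 = H`, `X 1 = E`. -/
noncomputable def idealCR (n : ℕ) : Ideal (MvPolynomial (Fin 2) ℂ) :=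
  Ideal.span {X 0 ^ n - X 1 ^ n, X 0 * X 1}

/-- The cohomology ring of the crepant resolution `Z` of `|P(1,…,1,n)|`:
`ℂ[h,e]/⟨hⁿ + (−1)ⁿ(e/n)ⁿ, he⟩`, with `X 0 = h`, `X 1 = e`. -/
noncomputable def idealZ (n : ℕ) : Ideal (MvPolynomial (Fin 2) ℂ) :=
  Ideal.span {X 0 ^ n + C ((-1 : ℂ) ^ n * (1 / (n : ℂ)) ^ n) * X 1 ^ n, X 0 * X 1}

theorem crepant_resolution_P11n (n : ℕ) (hn : 2 ≤ n) :
    ∃ φ : (MvPolynomial (Fin 2) ℂ ⧸ idealCR n) ≃ₐ[ℂ] (MvPolynomial (Fin 2) ℂ ⧸ idealZ n),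
      φ (Ideal.Quotient.mk (idealCR n) (X 0)) = Ideal.Quotient.mk (idealZ n) (X 0) ∧
      φ (Ideal.Quotient.mk (idealCR n) (X 1)) =
        (-(Complex.exp (Real.pi * Complex.I / n)) / n) •
          Ideal.Quotient.mk (idealZ n) (X 1) := by
  have hn0 : (n : ℂ) ≠ 0 := Nat.cast_ne_zero.mpr (by omega)
  set ζ : ℂ := Complex.exp (Real.pi * Complex.I / n) with hζdef
  have hζ0 : ζ ≠ 0 := Complex.exp_ne_zero _
  have hζn : ζ ^ n = -1 := by
    rw [hζdef, ← Complex.exp_nat_mul]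
    rw [show (n : ℂ) * (Real.pi * Complex.I / n) = Real.pi * Complex.I by field_simp]
    exact Complex.exp_pi_mul_I
  set c : ℂ := -ζ / n with hcdef
  set d : ℂ := -(n : ℂ) / ζ with hddef
  have hcd : c * d = 1 := by rw [hcdef, hddef]; field_simp
  have hdc : d * c = 1 := by rw [mul_comm]; exact hcd
  have h1 : ((-1 : ℂ) ^ n) * (-1 : ℂ) ^ n = 1 := by
    rw [← pow_add, ← two_mul, pow_mul]; norm_num
  have h2 : ((1 : ℂ) / n) ^ n * (n : ℂ) ^ n = 1 := by
    rw [← mul_pow, one_div, inv_mul_cancel₀ hn0, one_pow]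
  have hc : c ^ n = -((-1 : ℂ) ^ n * (1 / (n : ℂ)) ^ n) := by
    have hc0 : c = -1 * ζ * (1 / (n : ℂ)) := by rw [hcdef]; ring
    rw [hc0, mul_pow, mul_pow, hζn]; ring
  have hd : (-1 : ℂ) ^ n * (1 / (n : ℂ)) ^ n * d ^ n = -1 := by
    have hd0 : d = -1 * (n : ℂ) * ζ⁻¹ := by rw [hddef]; ring
    rw [hd0, mul_pow, mul_pow, inv_pow, hζn]
    rw [show ((-1 : ℂ))⁻¹ = -1 by norm_num]
    rw [show (-1 : ℂ) ^ n * (1 / (n : ℂ)) ^ n * ((-1 : ℂ) ^ n * (n : ℂ) ^ n * -1)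
        = -((((-1 : ℂ) ^ n) * (-1 : ℂ) ^ n) * (((1 : ℂ) / n) ^ n * (n : ℂ) ^ n)) from by ring,
      h1, h2]
    norm_num
  -- membership facts
  have memZ1 : (X 0 ^ n - (C c * X 1) ^ n : MvPolynomial (Fin 2) ℂ) ∈ idealZ n := by
    have heq : (X 0 ^ n - (C c * X 1) ^ n : MvPolynomial (Fin 2) ℂ)
        = X 0 ^ n + C ((-1 : ℂ) ^ n * (1 / (n : ℂ)) ^ n) * X 1 ^ n := by
      rw [mul_pow, ← map_pow, hc, map_neg]; ring
    rw [heq, idealZ]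
    exact Ideal.subset_span (Or.inl rfl)
  have memZ2 : (X 0 * (C c * X 1) : MvPolynomial (Fin 2) ℂ) ∈ idealZ n := by
    rw [show (X 0 * (C c * X 1) : MvPolynomial (Fin 2) ℂ) = C c * (X 0 * X 1) from by ring,
      idealZ]
    exact Ideal.mul_mem_left _ _ (Ideal.subset_span (Or.inr rfl))
  have memCR1 : (X 0 ^ n + C ((-1 : ℂ) ^ n * (1 / (n : ℂ)) ^ n) * (C d * X 1) ^ n :
      MvPolynomial (Fin 2) ℂ) ∈ idealCR n := by
    have heq : (X 0 ^ n + C ((-1 : ℂ) ^ n * (1 / (n : ℂ)) ^ n) * (C d * X 1) ^ n :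
        MvPolynomial (Fin 2) ℂ) = X 0 ^ n - X 1 ^ n := by
      rw [mul_pow, ← mul_assoc, ← map_pow, ← map_mul, hd, map_neg, map_one]; ring
    rw [heq, idealCR]
    exact Ideal.subset_span (Or.inl rfl)
  have memCR2 : (X 0 * (C d * X 1) : MvPolynomial (Fin 2) ℂ) ∈ idealCR n := by
    rw [show (X 0 * (C d * X 1) : MvPolynomial (Fin 2) ℂ) = C d * (X 0 * X 1) from by ring,
      idealCR]
    exact Ideal.mul_mem_left _ _ (Ideal.subset_span (Or.inr rfl))
  -- the algebra homomorphisms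
  set P : MvPolynomial (Fin 2) ℂ →ₐ[ℂ] MvPolynomial (Fin 2) ℂ := aeval ![X 0, C c * X 1]
    with hPdef
  set Q : MvPolynomial (Fin 2) ℂ →ₐ[ℂ] MvPolynomial (Fin 2) ℂ := aeval ![X 0, C d * X 1]
    with hQdef
  set f : MvPolynomial (Fin 2) ℂ →ₐ[ℂ] MvPolynomial (Fin 2) ℂ ⧸ idealZ n :=
    (Ideal.Quotient.mkₐ ℂ (idealZ n)).comp P with hfdef
  set g : MvPolynomial (Fin 2) ℂ →ₐ[ℂ] MvPolynomial (Fin 2) ℂ ⧸ idealCR n :=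
    (Ideal.Quotient.mkₐ ℂ (idealCR n)).comp Q with hgdef
  have hfp : ∀ p, f p = Ideal.Quotient.mk (idealZ n) (P p) := fun p => by
    rw [hfdef]; simp only [AlgHom.comp_apply, Ideal.Quotient.mkₐ_eq_mk]
  have hgp : ∀ p, g p = Ideal.Quotient.mk (idealCR n) (Q p) := fun p => by
    rw [hgdef]; simp only [AlgHom.comp_apply, Ideal.Quotient.mkₐ_eq_mk]
  have hf0 : ∀ a ∈ idealCR n, f a = 0 := by
    have hle : idealCR n ≤ RingHom.ker f.toRingHom := by
      rw [idealCR, Ideal.span_le]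
      rintro p (rfl | rfl) <;>
        simp only [SetLike.mem_coe, RingHom.mem_ker, AlgHom.toRingHom_eq_coe, RingHom.coe_coe,
          hfp, Ideal.Quotient.eq_zero_iff_mem]
      · have hP1 : P (X 0 ^ n - X 1 ^ n) = X 0 ^ n - (C c * X 1) ^ n := by
          simp [hPdef]
        rw [hP1]; exact memZ1
      · have hP2 : P (X 0 * X 1) = X 0 * (C c * X 1) := by simp [hPdef]
        rw [hP2]; exact memZ2
    exact fun a ha => hle ha
  have hg0 : ∀ a ∈ idealZ n, g a = 0 := by
    have hle : idealZ n ≤ RingHom.ker g.toRingHom := by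
      rw [idealZ, Ideal.span_le]
      rintro p (rfl | rfl) <;>
        simp only [SetLike.mem_coe, RingHom.mem_ker, AlgHom.toRingHom_eq_coe, RingHom.coe_coe,
          hgp, Ideal.Quotient.eq_zero_iff_mem]
      · have hQ1 : Q (X 0 ^ n + C ((-1 : ℂ) ^ n * (1 / (n : ℂ)) ^ n) * X 1 ^ n)
            = X 0 ^ n + C ((-1 : ℂ) ^ n * (1 / (n : ℂ)) ^ n) * (C d * X 1) ^ n := by
          simp [hQdef, algebraMap_eq]
        rw [hQ1]; exact memCR1
      · have hQ2 : Q (X 0 * X 1) = X 0 * (C d * X 1) := by simp [hQdef]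
        rw [hQ2]; exact memCR2
    exact fun a ha => hle ha
  set F : (MvPolynomial (Fin 2) ℂ ⧸ idealCR n) →ₐ[ℂ] MvPolynomial (Fin 2) ℂ ⧸ idealZ n :=
    Ideal.Quotient.liftₐ (idealCR n) f hf0 with hFdef
  set G : (MvPolynomial (Fin 2) ℂ ⧸ idealZ n) →ₐ[ℂ] MvPolynomial (Fin 2) ℂ ⧸ idealCR n :=
    Ideal.Quotient.liftₐ (idealZ n) g hg0 with hGdef
  have hFmk : ∀ p, F (Ideal.Quotient.mk (idealCR n) p) = f p := fun p => by
    simp [hFdef, Ideal.Quotient.liftₐ_apply]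
    exact Ideal.Quotient.lift_mk _ _ _
  have hGmk : ∀ p, G (Ideal.Quotient.mk (idealZ n) p) = g p := fun p => by
    simp [hGdef, Ideal.Quotient.liftₐ_apply]
    exact Ideal.Quotient.lift_mk _ _ _
  have hPX0 : P (X 0) = X 0 := by simp [hPdef]
  have hPX1 : P (X 1) = C c * X 1 := by simp [hPdef]
  have hQX0 : Q (X 0) = X 0 := by simp [hQdef]
  have hQX1 : Q (X 1) = C d * X 1 := by simp [hQdef]
  have hPCd : P (C d * X 1) = C d * (C c * X 1) := by
    simp [hPdef, algebraMap_eq]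
  have hQCc : Q (C c * X 1) = C c * (C d * X 1) := by
    simp [hQdef, algebraMap_eq]
  have hFG : F.comp G = AlgHom.id ℂ _ := by
    apply Ideal.Quotient.algHom_ext
    apply MvPolynomial.algHom_ext
    intro i
    fin_cases i
    · show F (G (Ideal.Quotient.mk (idealZ n) (X 0))) = Ideal.Quotient.mk (idealZ n) (X 0)
      rw [hGmk, hgp, hQX0, hFmk, hfp, hPX0]
    · show F (G (Ideal.Quotient.mk (idealZ n) (X 1))) = Ideal.Quotient.mk (idealZ n) (X 1)
      rw [hGmk, hgp, hQX1, hFmk, hfp, hPCd]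
      rw [show (C d * (C c * X 1) : MvPolynomial (Fin 2) ℂ) = C (d * c) * X 1 from by
        rw [map_mul]; ring, hdc, map_one, one_mul]
  have hGF : G.comp F = AlgHom.id ℂ _ := by
    apply Ideal.Quotient.algHom_ext
    apply MvPolynomial.algHom_ext
    intro i
    fin_cases i
    · show G (F (Ideal.Quotient.mk (idealCR n) (X 0))) = Ideal.Quotient.mk (idealCR n) (X 0)
      rw [hFmk, hfp, hPX0, hGmk, hgp, hQX0]
    · show G (F (Ideal.Quotient.mk (idealCR n) (X 1))) = Ideal.Quotient.mk (idealCR n) (X 1)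
      rw [hFmk, hfp, hPX1, hGmk, hgp, hQCc]
      rw [show (C c * (C d * X 1) : MvPolynomial (Fin 2) ℂ) = C (c * d) * X 1 from by
        rw [map_mul]; ring, hcd, map_one, one_mul]
  refine ⟨AlgEquiv.ofAlgHom F G hFG hGF, ?_, ?_⟩
  · show F (Ideal.Quotient.mk (idealCR n) (X 0)) = Ideal.Quotient.mk (idealZ n) (X 0)
    rw [hFmk, hfp, hPX0]
  · show F (Ideal.Quotient.mk (idealCR n) (X 1))
      = c • Ideal.Quotient.mk (idealZ n) (X 1)
    rw [hFmk, hfp, hPX1, ← Ideal.Quotient.mkₐ_eq_mk ℂ, ← map_smul]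
    congr 1
    rw [smul_eq_C_mul]
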